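/- Let G be an infinite, locally finite, connected, vertex-transitive simple graph, and run site FPP on G with i.i.d. mean-1 exponential passage times started at a base vertex, with infected region A(t) at time t. Then there exists a constant D > 0 such that, with high probability as t → ∞, |A(t)| ≤ D^t. -/

import Mathlib

/-!
Transitivity makes all degrees equal, so they are bounded by some `Δ`. If a vertex outside
the ball of radius `n` around `o` is infected by time `t`, then some self-avoiding path of
length `n` from `o` has passage time below `t + 1`. A path of length `2k` with passage time
below `c` has at least `k` vertices with passage time below `c / k`; since `P(ρ < a) ≤ a`,
independence and a union bound over the `≤ 4 ^ k` choices of these vertices bound its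
probability by `(4c / k) ^ k`. There are at most `Δ ^ (2k)` such paths, so for `k ≥ 8 Δ² c`
the probability that one of them is that fast is at most `2 ^ (-k)`. Hence with high
probability `A(t)` lies in a ball of radius `O(Δ² t)`, which has at most `(Δ + 1) ^ O(Δ² t)`
vertices.
-/

open MeasureTheory ProbabilityTheory Filter
open scoped ENNReal

/-- `G` is vertex-transitive. -/
def VertexTransitive {V : Type*} (G : SimpleGraph V) : Prop :=
  ∀ u v : V, ∃ φ : G ≃g G, φ u = v

/-- The passage time of a walk: the sum of the passage times of its vertices,
excluding the initial one. -/
noncomputable def walkTime {V : Type*} {G : SimpleGraph V} {o v : V}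
    (ω : V → ℝ) (p : G.Walk o v) : ℝ≥0∞ :=
  (p.support.tail.map fun x => ENNReal.ofReal (ω x)).sum

/-- The infection time of a vertex `v` in site FPP started at `o` with passage
times `ω`: the infimum of the passage times of walks from `o` to `v`. -/
noncomputable def infectionTime {V : Type*} (G : SimpleGraph V) (o : V)
    (ω : V → ℝ) (v : V) : ℝ≥0∞ :=
  ⨅ p : G.Walk o v, walkTime ω p

/-- The infected region at time `t`. -/
def infected {V : Type*} (G : SimpleGraph V) (o : V) (ω : V → ℝ) (t : ℝ) : Set V :=
  {v | infectionTime G o ω v ≤ ENNReal.ofReal t}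

lemma expMeasure_one_Iio_le (a : ℝ) : expMeasure 1 (Set.Iio a) ≤ ENNReal.ofReal a := by
  have := isProbabilityMeasure_expMeasure one_pos
  calc expMeasure 1 (Set.Iio a) ≤ expMeasure 1 (Set.Iic a) :=
        measure_mono Set.Iio_subset_Iic_self
    _ = ENNReal.ofReal (cdf (expMeasure 1) a) := (ofReal_cdf _ a).symm
    _ ≤ ENNReal.ofReal a := by
      rw [cdf_expMeasure_eq one_pos, one_mul]
      split_ifs
      · exact ENNReal.ofReal_le_ofReal (by linarith [Real.add_one_le_exp (-a)])
      · simp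

section IIDExponential

variable {V : Type*} {μ : Measure (V → ℝ)}

lemma measure_forall_lt_le (hdist : ∀ v : V, μ.map (fun ω => ω v) = expMeasure 1)
    (hindep : iIndepFun (fun v => fun ω : V → ℝ => ω v) μ) (T : Finset V) (a : ℝ) :
    μ {ω | ∀ x ∈ T, ω x < a} ≤ ENNReal.ofReal a ^ T.card := by
  have hT : {ω : V → ℝ | ∀ x ∈ T, ω x < a} = ⋂ x ∈ T, (fun ω => ω x) ⁻¹' Set.Iio a := by
    ext; simp
  rw [hT, iIndepFun_iff_measure_inter_preimage_eq_mul.mp hindep T fun _ _ => measurableSet_Iio,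
    ← Finset.prod_const]
  refine Finset.prod_le_prod' fun x _ => ?_
  rw [← Measure.map_apply (measurable_pi_apply x) measurableSet_Iio, hdist x]
  exact expMeasure_one_Iio_le a

lemma exists_powersetCard_forall_lt_of_sum_lt {ι : Type*} {s : Finset ι} {k : ℕ}
    (hs : 2 * k ≤ s.card) {f : ι → ℝ} {c : ℝ}
    (hf : ∑ x ∈ s, ENNReal.ofReal (f x) < ENNReal.ofReal c) :
    ∃ T ∈ s.powersetCard k, ∀ x ∈ T, f x < c / k := by
  suffices hF : k ≤ (s.filter fun x => f x < c / k).card by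
    obtain ⟨T, hTF, hT⟩ := Finset.exists_subset_card_eq hF
    exact ⟨T, Finset.mem_powersetCard.mpr ⟨hTF.trans (Finset.filter_subset _ _), hT⟩,
      fun x hx => (Finset.mem_filter.mp (hTF hx)).2⟩
  by_contra! hF
  have hlarge : k ≤ (s.filter fun x => ¬f x < c / k).card := by
    have := Finset.card_filter_add_card_filter_not (s := s) (fun x => f x < c / k)
    omega
  refine hf.not_ge ?_
  calc ENNReal.ofReal c = k * ENNReal.ofReal (c / k) := by
        rw [← ENNReal.ofReal_natCast, ← ENNReal.ofReal_mul k.cast_nonneg,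
          mul_div_cancel₀ _ (by exact_mod_cast (by omega : k ≠ 0))]
    _ ≤ ∑ x ∈ s.filter fun x => ¬f x < c / k, ENNReal.ofReal (c / k) := by
        rw [Finset.sum_const, nsmul_eq_mul]; gcongr
    _ ≤ ∑ x ∈ s.filter fun x => ¬f x < c / k, ENNReal.ofReal (f x) :=
        Finset.sum_le_sum fun x hx =>
          ENNReal.ofReal_le_ofReal (not_lt.mp (Finset.mem_filter.mp hx).2)
    _ ≤ ∑ x ∈ s, ENNReal.ofReal (f x) :=
        Finset.sum_le_sum_of_subset (Finset.filter_subset _ _)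

lemma measure_sum_lt_le (hdist : ∀ v : V, μ.map (fun ω => ω v) = expMeasure 1)
    (hindep : iIndepFun (fun v => fun ω : V → ℝ => ω v) μ) {s : Finset V} {k : ℕ}
    (hs : s.card = 2 * k) (c : ℝ) :
    μ {ω | ∑ x ∈ s, ENNReal.ofReal (ω x) < ENNReal.ofReal c}
      ≤ (4 * ENNReal.ofReal (c / k)) ^ k := by
  calc μ {ω | ∑ x ∈ s, ENNReal.ofReal (ω x) < ENNReal.ofReal c}
      ≤ μ (⋃ T ∈ s.powersetCard k, {ω | ∀ x ∈ T, ω x < c / k}) := by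
        refine measure_mono fun ω hω => ?_
        simpa using exists_powersetCard_forall_lt_of_sum_lt hs.ge hω
    _ ≤ ∑ T ∈ s.powersetCard k, μ {ω | ∀ x ∈ T, ω x < c / k} :=
        measure_biUnion_finset_le _ _
    _ ≤ ∑ T ∈ s.powersetCard k, ENNReal.ofReal (c / k) ^ k := by
        refine Finset.sum_le_sum fun T hT => ?_
        rw [← (Finset.mem_powersetCard.mp hT).2]
        exact measure_forall_lt_le hdist hindep T _
    _ ≤ (4 * ENNReal.ofReal (c / k)) ^ k := by
        rw [Finset.sum_const, Finset.card_powersetCard, hs, nsmul_eq_mul, mul_pow]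
        gcongr
        exact_mod_cast Nat.centralBinom_le_four_pow k

end IIDExponential

namespace SimpleGraph

variable {V : Type*} [DecidableEq V] {G : SimpleGraph V} [G.LocallyFinite]

variable (G) in
def closedBallFinset : V → ℕ → Finset V
  | u, 0 => {u}
  | u, n + 1 => insert u ((G.neighborFinset u).biUnion fun w => closedBallFinset w n)

lemma self_mem_closedBallFinset (u : V) : ∀ n, u ∈ G.closedBallFinset u n
  | 0 => Finset.mem_singleton_self u
  | _ + 1 => Finset.mem_insert_self _ _

lemma Walk.mem_closedBallFinset {u v : V} (p : G.Walk u v) {n : ℕ} (hn : p.length ≤ n) :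
    v ∈ G.closedBallFinset u n := by
  induction p generalizing n with
  | nil => exact self_mem_closedBallFinset _ n
  | @cons u w v huw q ih =>
    cases n with
    | zero => simp at hn
    | succ n =>
      exact Finset.mem_insert_of_mem (Finset.mem_biUnion.mpr
        ⟨w, (mem_neighborFinset G u w).mpr huw, ih (by simpa using hn)⟩)

lemma card_closedBallFinset_le {Δ : ℕ} (hΔ : ∀ v, G.degree v ≤ Δ) (u : V) (n : ℕ) :
    (G.closedBallFinset u n).card ≤ (Δ + 1) ^ n := by
  induction n generalizing u with
  | zero => simp [closedBallFinset]
  | succ n ih =>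
    calc (G.closedBallFinset u (n + 1)).card
        ≤ 1 + ∑ w ∈ G.neighborFinset u, (G.closedBallFinset w n).card :=
          (Finset.card_insert_le _ _).trans
            (by rw [add_comm]; gcongr; exact Finset.card_biUnion_le)
      _ ≤ 1 + Δ * (Δ + 1) ^ n := by
          gcongr
          calc _ ≤ ∑ w ∈ G.neighborFinset u, (Δ + 1) ^ n := Finset.sum_le_sum fun w _ => ih w
            _ ≤ Δ * (Δ + 1) ^ n := by
              rw [Finset.sum_const, smul_eq_mul, card_neighborFinset_eq_degree]
              gcongr
              exact hΔ u
      _ ≤ (Δ + 1) ^ (n + 1) := by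
          rw [pow_succ]; nlinarith [Nat.one_le_pow n (Δ + 1) Δ.succ_pos]

lemma sum_card_finsetWalkLength_le {Δ : ℕ} (hΔ : ∀ v, G.degree v ≤ Δ) (n : ℕ) (u : V)
    (S : Finset V) : ∑ v ∈ S, (G.finsetWalkLength n u v).card ≤ Δ ^ n := by
  induction n generalizing u with
  | zero =>
    calc ∑ v ∈ S, (G.finsetWalkLength 0 u v).card = ∑ v ∈ S, if u = v then 1 else 0 := by
          refine Finset.sum_congr rfl fun v _ => ?_
          by_cases h : u = v
          · subst h; simp [finsetWalkLength]
          · simp [finsetWalkLength, h]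
      _ ≤ Δ ^ 0 := by rw [Finset.sum_ite_eq]; split_ifs <;> simp
  | succ n ih =>
    calc ∑ v ∈ S, (G.finsetWalkLength (n + 1) u v).card
        ≤ ∑ v ∈ S, ∑ w : G.neighborSet u, (G.finsetWalkLength n w v).card := by
          refine Finset.sum_le_sum fun v _ => Finset.card_biUnion_le.trans_eq ?_
          simp only [Finset.card_map]
      _ = ∑ w : G.neighborSet u, ∑ v ∈ S, (G.finsetWalkLength n w v).card := Finset.sum_comm
      _ ≤ ∑ _w : G.neighborSet u, Δ ^ n := Finset.sum_le_sum fun w _ => ih w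
      _ ≤ Δ ^ (n + 1) := by
          rw [Finset.sum_const, Finset.card_univ, card_neighborSet_eq_degree, smul_eq_mul,
            pow_succ']
          exact Nat.mul_le_mul_right _ (hΔ u)

end SimpleGraph

section WalkTime

variable {V : Type*} {G : SimpleGraph V}

lemma walkTime_le_of_support_sublist (ω : V → ℝ) {u v w : V} {p : G.Walk u v}
    {q : G.Walk u w} (h : p.support.Sublist q.support) : walkTime ω p ≤ walkTime ω q := by
  rw [← p.cons_tail_support, ← q.cons_tail_support, List.cons_sublist_cons] at h
  exact (h.map _).sum_le_sum fun _ _ => zero_le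

lemma walkTime_bypass_le [DecidableEq V] (ω : V → ℝ) {u v : V} (p : G.Walk u v) :
    walkTime ω p.bypass ≤ walkTime ω p :=
  walkTime_le_of_support_sublist ω p.support_bypass_sublist_support

lemma walkTime_take_le (ω : V → ℝ) {u v : V} (p : G.Walk u v) (n : ℕ) :
    walkTime ω (p.take n) ≤ walkTime ω p :=
  walkTime_le_of_support_sublist ω (p.support_take n ▸ List.take_sublist _ _)

variable [DecidableEq V]

lemma SimpleGraph.Walk.IsPath.walkTime_eq_sum {u v : V} {p : G.Walk u v} (hp : p.IsPath)
    (ω : V → ℝ) : walkTime ω p = ∑ x ∈ p.support.tail.toFinset, ENNReal.ofReal (ω x) :=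
  (List.sum_toFinset _ hp.support_nodup.tail).symm

lemma SimpleGraph.Walk.IsPath.card_support_tail_toFinset {u v : V} {p : G.Walk u v}
    (hp : p.IsPath) : p.support.tail.toFinset.card = p.length := by
  rw [List.toFinset_card_of_nodup hp.support_nodup.tail, List.length_tail, p.length_support,
    Nat.add_sub_cancel]

end WalkTime

section FastPaths

open SimpleGraph

variable {V : Type*} [DecidableEq V] {G : SimpleGraph V} [G.LocallyFinite]

-- Every length-`n` walk from `o` ends in the ball of radius `n`, which keeps the union finite.
def fastPathEvent (G : SimpleGraph V) [G.LocallyFinite] (o : V) (n : ℕ) (c : ℝ) :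
    Set (V → ℝ) :=
  ⋃ v ∈ G.closedBallFinset o n, ⋃ p ∈ (G.finsetWalkLength n o v).filter (·.IsPath),
    {ω | walkTime ω p < ENNReal.ofReal c}

lemma infected_subset_closedBallFinset {o : V} {n : ℕ} {ω : V → ℝ} {t c : ℝ}
    (hω : ω ∉ fastPathEvent G o n c) (htc : t < c) (hc : 0 < c) :
    infected G o ω t ⊆ G.closedBallFinset o n := by
  intro v hv
  obtain ⟨p, hp⟩ : ∃ p : G.Walk o v, walkTime ω p < ENNReal.ofReal c :=
    iInf_lt_iff.mp (hv.trans_lt ((ENNReal.ofReal_lt_ofReal_iff hc).mpr htc))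
  by_cases hlen : n ≤ p.bypass.length
  · refine absurd ?_ hω
    have hq : (p.bypass.take n).length = n := by simpa using hlen
    simp only [fastPathEvent, Set.mem_iUnion, Finset.mem_filter, mem_finsetWalkLength_iff]
    exact ⟨_, (p.bypass.take n).mem_closedBallFinset hq.le, p.bypass.take n,
      ⟨hq, p.bypass_isPath.take n⟩,
      ((walkTime_take_le ω _ n).trans (walkTime_bypass_le ω p)).trans_lt hp⟩
  · exact p.bypass.mem_closedBallFinset (not_le.mp hlen).le

lemma measure_fastPathEvent_le {μ : Measure (V → ℝ)}
    (hdist : ∀ v : V, μ.map (fun ω => ω v) = expMeasure 1)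
    (hindep : iIndepFun (fun v => fun ω : V → ℝ => ω v) μ) {Δ : ℕ}
    (hΔ : ∀ v, G.degree v ≤ Δ) (o : V) {k : ℕ} {c : ℝ} (hk : 8 * Δ ^ 2 * c ≤ k) :
    μ (fastPathEvent G o (2 * k) c) ≤ 2⁻¹ ^ k := by
  set paths := fun v => (G.finsetWalkLength (2 * k) o v).filter (·.IsPath)
  have hpath : ∀ v, ∀ p ∈ paths v, μ {ω | walkTime ω p < ENNReal.ofReal c}
      ≤ (4 * ENNReal.ofReal (c / k)) ^ k := by
    intro v p hp
    obtain ⟨hlen, hp⟩ := Finset.mem_filter.mp hp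
    simp only [hp.walkTime_eq_sum]
    exact measure_sum_lt_le hdist hindep
      (hp.card_support_tail_toFinset.trans (mem_finsetWalkLength_iff.mp hlen)) c
  have hcount :
      ∑ v ∈ G.closedBallFinset o (2 * k), ((paths v).card : ℝ≥0∞) ≤ Δ ^ (2 * k) :=
    mod_cast (Finset.sum_le_sum fun v _ => Finset.card_filter_le _ _).trans
      (G.sum_card_finsetWalkLength_le hΔ (2 * k) o _)
  have hbase : (Δ : ℝ≥0∞) ^ 2 * (4 * ENNReal.ofReal (c / k)) ≤ 2⁻¹ := by
    rcases Nat.eq_zero_or_pos k with rfl | hk₀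
    · simp
    rw [← ENNReal.ofReal_natCast, ← ENNReal.ofReal_pow Δ.cast_nonneg,
      ← ENNReal.ofReal_ofNat 4, ← ENNReal.ofReal_mul (by norm_num),
      ← ENNReal.ofReal_mul (by positivity), ← ENNReal.ofReal_ofNat 2,
      ← ENNReal.ofReal_inv_of_pos two_pos]
    refine ENNReal.ofReal_le_ofReal ?_
    rw [mul_div_assoc', mul_div_assoc', div_le_iff₀ (by exact_mod_cast hk₀)]
    linarith
  calc μ (fastPathEvent G o (2 * k) c)
      ≤ ∑ v ∈ G.closedBallFinset o (2 * k), ∑ p ∈ paths v,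
          μ {ω | walkTime ω p < ENNReal.ofReal c} :=
        (measure_biUnion_finset_le _ _).trans
          (Finset.sum_le_sum fun v _ => measure_biUnion_finset_le _ _)
    _ ≤ ∑ v ∈ G.closedBallFinset o (2 * k),
          (paths v).card * (4 * ENNReal.ofReal (c / k)) ^ k :=
        Finset.sum_le_sum fun v _ =>
          (Finset.sum_le_sum (hpath v)).trans_eq (by rw [Finset.sum_const, nsmul_eq_mul])
    _ ≤ Δ ^ (2 * k) * (4 * ENNReal.ofReal (c / k)) ^ k := by
        rw [← Finset.sum_mul]; gcongr
    _ ≤ 2⁻¹ ^ k := by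
        rw [pow_mul, ← mul_pow]; gcongr

end FastPaths

lemma tendsto_measure_nhds_one_of_compl_subset {Ω ι : Type*} [MeasurableSpace Ω]
    {μ : Measure Ω} [IsProbabilityMeasure μ] {l : Filter ι} {A B : ι → Set Ω}
    (hB : Tendsto (fun i => μ (B i)) l (nhds 0)) (hBA : ∀ᶠ i in l, (B i)ᶜ ⊆ A i) :
    Tendsto (fun i => μ (A i)) l (nhds 1) := by
  have hlower : Tendsto (fun i => 1 - μ (B i)) l (nhds 1) := by
    simpa using ENNReal.Tendsto.sub tendsto_const_nhds hB (Or.inl ENNReal.one_ne_top)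
  refine tendsto_of_tendsto_of_tendsto_of_le_of_le' hlower tendsto_const_nhds ?_
    (Eventually.of_forall fun _ => prob_le_one)
  filter_upwards [hBA] with i hi
  calc 1 - μ (B i) ≤ μ (B i)ᶜ := by
        rw [tsub_le_iff_left, ← measure_univ (μ := μ)]; exact measure_univ_le_add_compl _
    _ ≤ μ (A i) := measure_mono hi

lemma Real.pow_le_rpow_pow_of_le_mul {b : ℝ} (hb : 1 ≤ b) {n E : ℕ} {t : ℝ}
    (h : (n : ℝ) ≤ E * t) : b ^ n ≤ (b ^ E) ^ t := by
  rw [← Real.rpow_natCast, ← Real.rpow_natCast b E, ← Real.rpow_mul (by linarith)]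
  exact Real.rpow_le_rpow_of_exponent_le hb h

theorem exists_tendsto_measure_encard_infected_le_of_degree_le {V : Type*} (G : SimpleGraph V)
    [G.LocallyFinite] {Δ : ℕ} (hΔ : ∀ v, G.degree v ≤ Δ) (hΔ₀ : 0 < Δ) (o : V)
    (μ : Measure (V → ℝ)) [IsProbabilityMeasure μ]
    (hdist : ∀ v : V, μ.map (fun ω => ω v) = expMeasure 1)
    (hindep : iIndepFun (fun v => fun ω : V → ℝ => ω v) μ) :
    ∃ D : ℝ, 0 < D ∧
      Tendsto (fun t : ℝ =>
          μ {ω | (infected G o ω t).encard ≤ ENNReal.ofReal (D ^ t)})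
        atTop (nhds 1) := by
  classical
  set k : ℝ → ℕ := fun t => ⌈8 * Δ ^ 2 * (t + 1)⌉₊
  set E : ℕ := 2 * (16 * Δ ^ 2 + 1)
  refine ⟨((Δ : ℝ) + 1) ^ E, by positivity,
    tendsto_measure_nhds_one_of_compl_subset (B := fun t => fastPathEvent G o (2 * k t) (t + 1))
      ?_ ?_⟩
  · have hk : Tendsto k atTop atTop := tendsto_nat_ceil_atTop.comp
      ((tendsto_atTop_add_const_right _ 1 tendsto_id).const_mul_atTop (by positivity))
    refine tendsto_of_tendsto_of_tendsto_of_le_of_le tendsto_const_nhds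
      ((ENNReal.tendsto_pow_atTop_nhds_zero_of_lt_one (by norm_num)).comp hk)
      (fun _ => zero_le) fun t => measure_fastPathEvent_le hdist hindep hΔ o (Nat.le_ceil _)
  · filter_upwards [eventually_ge_atTop 1] with t ht ω hω
    have hkE : ((2 * k t : ℕ) : ℝ) ≤ E * t := by
      have := Nat.ceil_lt_add_one (by positivity : 0 ≤ 8 * (Δ : ℝ) ^ 2 * (t + 1))
      push_cast [E]
      nlinarith
    calc ((infected G o ω t).encard : ℝ≥0∞)
        ≤ ((G.closedBallFinset o (2 * k t)).card : ℝ≥0∞) := by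
          exact_mod_cast (Set.encard_mono (infected_subset_closedBallFinset hω (lt_add_one t)
            (by linarith))).trans_eq (Set.encard_coe_eq_coe_finsetCard _)
      _ ≤ ((Δ + 1) ^ (2 * k t) : ℕ) := by
          exact_mod_cast G.card_closedBallFinset_le hΔ o _
      _ ≤ ENNReal.ofReal ((((Δ : ℝ) + 1) ^ E) ^ t) := by
          rw [← ENNReal.ofReal_natCast]
          refine ENNReal.ofReal_le_ofReal ?_
          push_cast
          exact Real.pow_le_rpow_pow_of_le_mul (le_add_of_nonneg_left Δ.cast_nonneg) hkE

theorem eden_size_exponential_bound_general {V : Type*}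
    (G : SimpleGraph V)
    (hlf : ∀ v : V, (G.neighborSet v).Finite)
    (htrans : VertexTransitive G) (o : V)
    (μ : Measure (V → ℝ)) [IsProbabilityMeasure μ]
    (hdist : ∀ v : V, μ.map (fun ω => ω v) = expMeasure 1)
    (hindep : iIndepFun (fun v => fun ω : V → ℝ => ω v) μ) :
    ∃ D : ℝ, 0 < D ∧
      Tendsto (fun t : ℝ =>
          μ {ω | (infected G o ω t).encard ≤ ENNReal.ofReal (D ^ t)})
        atTop (nhds 1) := by
  have : G.LocallyFinite := fun v => (hlf v).fintype
  have hdeg : ∀ v, G.degree v ≤ G.degree o + 1 := fun v => by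
    obtain ⟨φ, rfl⟩ := htrans o v
    exact (φ.degree_eq o).trans_le (G.degree o).le_succ
  exact exists_tendsto_measure_encard_infected_le_of_degree_le G hdeg (G.degree o).succ_pos o μ
    hdist hindep

theorem eden_size_exponential_bound {V : Type*}
    (G : SimpleGraph V) (hinf : Infinite V)
    (hlf : ∀ v : V, (G.neighborSet v).Finite) (hconn : G.Connected)
    (htrans : VertexTransitive G) (o : V)
    (μ : Measure (V → ℝ)) [IsProbabilityMeasure μ]
    (hdist : ∀ v : V, μ.map (fun ω => ω v) = expMeasure 1)
    (hindep : iIndepFun (fun v => fun ω : V → ℝ => ω v) μ) :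
    ∃ D : ℝ, 0 < D ∧
      Tendsto (fun t : ℝ =>
          μ {ω | (infected G o ω t).encard ≤ ENNReal.ofReal (D ^ t)})
        atTop (nhds 1) :=
  eden_size_exponential_bound_general G hlf htrans o μ hdist hindep
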